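/- For n ≥ 1, the derivative of the h(x)-Fibonacci polynomial satisfies F'_{h,n}(x) = h'(x) · (n·L_{h,n}(x) − h(x)·F_{h,n}(x)) / (h(x)² + 4). -/
import Mathlib


open Finset

/-- Incomplete h-Fibonacci polynomials: F_{h,n}^l = ∑_{i=0}^l C(n-1-i,i) h^(n-1-2i). -/
noncomputable def incF (h : ℝ) (n l : ℕ) : ℝ :=
  ∑ i ∈ Finset.range (l + 1), (Nat.choose (n - 1 - i) i : ℝ) * h ^ (n - 1 - 2 * i)

/-- Incomplete h-Lucas polynomials: L_{h,n}^l = ∑_{i=0}^l (n/(n-i)) C(n-i,i) h^(n-2i). -/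
noncomputable def incL (h : ℝ) (n l : ℕ) : ℝ :=
  ∑ i ∈ Finset.range (l + 1), ((n : ℝ) / ((n - i : ℕ) : ℝ)) * (Nat.choose (n - i) i : ℝ) * h ^ (n - 2 * i)

/-- h-Fibonacci sequence. -/
noncomputable def Fh (h : ℝ) : ℕ → ℝ
  | 0 => 0
  | 1 => 1
  | n + 2 => h * Fh h (n + 1) + Fh h n

/-- h-Lucas sequence. -/
noncomputable def Lh (h : ℝ) : ℕ → ℝ
  | 0 => 2
  | 1 => h
  | n + 2 => h * Lh h (n + 1) + Lh h n


/-- Formal derivative of `Fh` with respect to the variable. -/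
noncomputable def Fh' (t : ℝ) : ℕ → ℝ
  | 0 => 0
  | 1 => 0
  | n + 2 => Fh t (n + 1) + t * Fh' t (n + 1) + Fh' t n

lemma hasDerivAt_Fh (x : ℝ) : ∀ n : ℕ, HasDerivAt (fun t => Fh t n) (Fh' x n) x := by
  intro n
  induction n using Nat.twoStepInduction with
  | zero => simpa [Fh, Fh'] using (hasDerivAt_const x (0:ℝ))
  | one => simpa [Fh, Fh'] using (hasDerivAt_const x (1:ℝ))
  | more n ih1 ih2 =>
    have h1 : HasDerivAt (fun t => t * Fh t (n+1) + Fh t n)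
        (1 * Fh x (n+1) + x * Fh' x (n+1) + Fh' x n) x :=
      (((hasDerivAt_id x).mul ih2).add ih1)
    have : (fun t => t * Fh t (n+1) + Fh t n) = (fun t => Fh t (n+2)) := by
      funext t; simp [Fh]
    rw [this] at h1
    simpa [Fh', one_mul] using h1

lemma lucas_fib_id (t : ℝ) : ∀ n : ℕ, Lh t (n+2) + Lh t n = (t^2 + 4) * Fh t (n+1) := by
  intro n
  induction n using Nat.twoStepInduction with
  | zero => simp [Lh, Fh]; ring
  | one => simp [Lh, Fh]; ring
  | more n ih1 ih2 =>
    have e : Lh t (n+2+2) + Lh t (n+2) = t * (Lh t (n+1+2) + Lh t (n+1)) + (Lh t (n+2) + Lh t n) := by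
      have h4 : Lh t (n+4) = t * Lh t (n+3) + Lh t (n+2) := rfl
      have h2 : Lh t (n+2) = t * Lh t (n+1) + Lh t n := rfl
      show Lh t (n+4) + Lh t (n+2) = t * (Lh t (n+3) + Lh t (n+1)) + (Lh t (n+2) + Lh t n)
      linear_combination h4 + h2
    rw [e, ih1, ih2]
    have : Fh t (n+2+1) = t * Fh t (n+1+1) + Fh t (n+1) := rfl
    rw [this]; ring

lemma key_id (t : ℝ) : ∀ n : ℕ, (t^2 + 4) * Fh' t n = (n : ℝ) * Lh t n - t * Fh t n := by
  intro n
  induction n using Nat.twoStepInduction with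
  | zero => simp [Fh', Lh, Fh]
  | one => simp [Fh', Lh, Fh]
  | more n ih1 ih2 =>
    have hF : Fh' t (n+2) = Fh t (n+1) + t * Fh' t (n+1) + Fh' t n := rfl
    have hL2 : Lh t (n+2) = t * Lh t (n+1) + Lh t n := rfl
    have hF2 : Fh t (n+2) = t * Fh t (n+1) + Fh t n := rfl
    have lf := lucas_fib_id t n
    have expand : (t^2 + 4) * Fh' t (n+2)
        = (t^2 + 4) * Fh t (n+1) + t * ((t^2+4) * Fh' t (n+1)) + (t^2+4) * Fh' t n := by
      rw [hF]; ring
    rw [expand, ih1, ih2, ← lf, hL2, hF2]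
    push_cast
    ring

theorem deriv_Fh (h : ℝ → ℝ) (x : ℝ) (hd : DifferentiableAt ℝ h x) (n : ℕ) (hn : 1 ≤ n) :
    deriv (fun y => Fh (h y) n) x =
      deriv h x * ((n : ℝ) * Lh (h x) n - h x * Fh (h x) n) / ((h x) ^ 2 + 4) := by
  have key : HasDerivAt (fun y => Fh (h y) n) (Fh' (h x) n * deriv h x) x :=
    (hasDerivAt_Fh (h x) n).comp x hd.hasDerivAt
  rw [key.deriv]
  have hpos : (h x)^2 + 4 ≠ 0 := by positivity
  have := key_id (h x) n
  rw [← this]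
  field_simp
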